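/- arXiv:1801.07908 — 7 statements merged into one kernel-verified Lean document; each statement's English description precedes it below -/
import Mathlib

section
/- Let F be a free group and let S be a subset of F whose generated subgroup is nonabelian. If an element g of F commutes with every element of S, then g = 1. -/
/-- If a nontrivial element `z` of a free group commutes with the generator `of c`,
then the first letter of the reduced word of `z` has base `c`. -/
lemma aux_first_letter {β : Type*} [DecidableEq β] (z : FreeGroup β) (c : β)
    (h : z * FreeGroup.of c = FreeGroup.of c * z) (x₀ : β × Bool) (L : List (β × Bool))
    (hw : z.toWord = x₀ :: L) : x₀.1 = c := by
  classical
  by_contra hx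
  have hr : FreeGroup.reduce z.toWord = x₀ :: L := by rw [FreeGroup.reduce_toWord, hw]
  have h1 : (FreeGroup.of c * z).toWord = (c, true) :: x₀ :: L := by
    conv_lhs => rw [← FreeGroup.mk_toWord (x := z)]
    rw [show (FreeGroup.of c : FreeGroup β) = FreeGroup.mk [(c, true)] from rfl,
      FreeGroup.mul_mk, FreeGroup.toWord_mk, List.singleton_append,
      FreeGroup.reduce.cons, hr]
    simp only []
    rw [if_neg]
    intro hcond
    exact hx hcond.1.symm
  have h2 : (z * FreeGroup.of c).toWord = (c, true) :: x₀ :: L := by rw [h, h1]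
  have hsub : List.Sublist ((z * FreeGroup.of c).toWord) (z.toWord ++ [(c, true)]) := by
    have := FreeGroup.toWord_mul_sublist z (FreeGroup.of c)
    rwa [FreeGroup.toWord_of] at this
  have hlen : (z * FreeGroup.of c).toWord.length = (z.toWord ++ [(c, true)]).length := by
    rw [h2, hw]
    simp
  have heq : (z * FreeGroup.of c).toWord = z.toWord ++ [(c, true)] :=
    hsub.eq_of_length hlen
  rw [h2, hw, List.cons_append] at heq
  have : (c, true) = x₀ := (List.cons.injEq _ _ _ _ ▸ heq).1
  exact hx (by rw [← this])

/-- A free group on a subsingleton type is commutative. -/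
lemma freeGroup_comm_of_subsingleton {β : Type*} [Subsingleton β] (u v : FreeGroup β) :
    u * v = v * u := by
  have key : ∀ a : β, ∀ w : FreeGroup β, Commute (FreeGroup.of a) w := by
    intro a w
    refine FreeGroup.induction_on w (Commute.one_right _) (fun x => ?_) (fun x ih => ih.inv_right)
      (fun x y hx hy => hx.mul_right hy)
    have : x = a := Subsingleton.elim _ _
    subst this
    exact Commute.refl _
  have : Commute u v := by
    refine FreeGroup.induction_on u (Commute.one_left _) (fun x => key x v)
      (fun x ih => ih.inv_left) (fun x y hx hy => hx.mul_left hy)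
  exact this

theorem stmt_0 {α : Type*} (S : Set (FreeGroup α))
    (hna : ∃ x ∈ Subgroup.closure S, ∃ y ∈ Subgroup.closure S, x * y ≠ y * x)
    (g : FreeGroup α) (hg : ∀ s ∈ S, g * s = s * g) : g = 1 := by
  classical
  by_contra hgne
  obtain ⟨x, hx, y, hy, hxy⟩ := hna
  set K := Subgroup.centralizer ({g} : Set (FreeGroup α)) with hK
  have hSK : Subgroup.closure S ≤ K := by
    rw [Subgroup.closure_le]
    intro s hs
    rw [SetLike.mem_coe, Subgroup.mem_centralizer_iff]
    rintro h rfl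
    exact hg s hs
  have hxK : x ∈ K := hSK hx
  have hyK : y ∈ K := hSK hy
  have hgK : g ∈ K := by
    rw [Subgroup.mem_centralizer_iff]
    rintro h rfl
    rfl
  obtain ⟨ι, ⟨b⟩⟩ := (inferInstance : IsFreeGroup K).nonempty_basis
  set e : K ≃* FreeGroup ι := b.repr with he
  set ζ : FreeGroup ι := e ⟨g, hgK⟩ with hζdef
  have hζcomm : ∀ w : FreeGroup ι, ζ * w = w * ζ := by
    intro w
    have hmem : (↑(e.symm w) : FreeGroup α) ∈ K := (e.symm w).2
    rw [Subgroup.mem_centralizer_iff] at hmem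
    have h1 : g * ↑(e.symm w) = ↑(e.symm w) * g := hmem g rfl
    have h2 : (⟨g, hgK⟩ : K) * e.symm w = e.symm w * ⟨g, hgK⟩ := by
      ext
      exact h1
    have := congrArg e h2
    rwa [map_mul, map_mul, MulEquiv.apply_symm_apply, ← hζdef] at this
  have hζne : ζ ≠ 1 := by
    intro hζ1
    apply hgne
    have : (⟨g, hgK⟩ : K) = 1 := e.injective (by rw [← hζdef, hζ1, map_one])
    exact congrArg Subtype.val this
  have hword : ζ.toWord ≠ [] := fun hnil => hζne (FreeGroup.toWord_eq_nil_iff.mp hnil)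
  obtain ⟨x₀, L, hw⟩ := List.exists_cons_of_ne_nil hword
  haveI : Subsingleton ι := by
    constructor
    intro a b'
    have ha : x₀.1 = a := aux_first_letter ζ a (hζcomm (FreeGroup.of a)) x₀ L hw
    have hb : x₀.1 = b' := aux_first_letter ζ b' (hζcomm (FreeGroup.of b')) x₀ L hw
    rw [← ha, ← hb]
  have hcomm : e ⟨x, hxK⟩ * e ⟨y, hyK⟩ = e ⟨y, hyK⟩ * e ⟨x, hxK⟩ :=
    freeGroup_comm_of_subsingleton _ _
  apply hxy
  have : (⟨x, hxK⟩ : K) * ⟨y, hyK⟩ = ⟨y, hyK⟩ * ⟨x, hxK⟩ := by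
    apply e.injective
    rw [map_mul, map_mul, hcomm]
  exact congrArg Subtype.val this
end

section
/- In a free group, if two elements a and b commute, then there exists an element c such that a and b are both powers (integer powers) of c. -/
open Subgroup

/-- Two generators of a free group commute only if they are equal. -/
lemma freeGroup_of_comm {β : Type*} {x y : β}
    (hxy : FreeGroup.of x * FreeGroup.of y = FreeGroup.of y * FreeGroup.of x) : x = y := by
  classical
  by_contra hne
  set s : Equiv.Perm (Fin 3) := Equiv.swap 0 1
  set t : Equiv.Perm (Fin 3) := Equiv.swap 1 2
  set f : β → Equiv.Perm (Fin 3) := fun z => if z = x then s else if z = y then t else 1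
  have hx : f x = s := by simp [f]
  have hy : f y = t := by simp [f, hne, Ne.symm hne]
  have := congrArg (FreeGroup.lift f) hxy
  simp only [map_mul, FreeGroup.lift_apply_of, hx, hy] at this
  have h0 := congrArg (fun p : Equiv.Perm (Fin 3) => p 0) this
  simp [s, t, Equiv.swap_apply_def] at h0

/-- A commutative free group is cyclic. -/
lemma isFreeGroup_comm_cyclic {G : Type*} [Group G] [IsFreeGroup G]
    (hc : ∀ x y : G, x * y = y * x) : ∃ c : G, ∀ x : G, ∃ n : ℤ, x = c ^ n := by
  set e : G ≃* FreeGroup (IsFreeGroup.Generators G) := IsFreeGroup.toFreeGroup G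
  have hsub : Subsingleton (IsFreeGroup.Generators G) := by
    constructor
    intro i j
    apply freeGroup_of_comm (x := i) (y := j)
    have := hc (e.symm (FreeGroup.of i)) (e.symm (FreeGroup.of j))
    have := congrArg e this
    simpa using this
  rcases isEmpty_or_nonempty (IsFreeGroup.Generators G) with hE | ⟨⟨i⟩⟩
  · refine ⟨1, fun x => ⟨0, ?_⟩⟩
    have htop : (⊤ : Subgroup (FreeGroup (IsFreeGroup.Generators G))) = ⊥ := by
      rw [← FreeGroup.closure_range_of]
      rw [Set.range_eq_empty]
      exact Subgroup.closure_empty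
    have : e x ∈ (⊥ : Subgroup (FreeGroup (IsFreeGroup.Generators G))) := by
      rw [← htop]; trivial
    rw [Subgroup.mem_bot] at this
    have : x = 1 := by
      have := congrArg e.symm this
      simpa using this
    simp [this]
  · refine ⟨e.symm (FreeGroup.of i), fun x => ?_⟩
    have hmem : e x ∈ Subgroup.closure ({FreeGroup.of i} :
        Set (FreeGroup (IsFreeGroup.Generators G))) := by
      have hle : Subgroup.closure (Set.range (FreeGroup.of :
          IsFreeGroup.Generators G → FreeGroup (IsFreeGroup.Generators G))) ≤
          Subgroup.closure {FreeGroup.of i} := by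
        apply Subgroup.closure_mono
        rintro _ ⟨j, rfl⟩
        simp [Subsingleton.elim j i]
      apply hle
      rw [FreeGroup.closure_range_of]
      trivial
    rw [Subgroup.mem_closure_singleton] at hmem
    obtain ⟨n, hn⟩ := hmem
    refine ⟨n, ?_⟩
    have := congrArg e.symm hn
    simpa using this.symm

theorem stmt_1 {α : Type*} (a b : FreeGroup α) (h : a * b = b * a) :
    ∃ (c : FreeGroup α) (m n : ℤ), a = c ^ m ∧ b = c ^ n := by
  set H : Subgroup (FreeGroup α) := Subgroup.closure {a, b} with hH
  have hcomm : ∀ x ∈ H, ∀ y ∈ H, Commute x y := by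
    intro x hx
    refine Subgroup.closure_induction ?_ ?_ ?_ ?_ hx
    · intro z hz y hy
      refine Subgroup.closure_induction ?_ ?_ ?_ ?_ hy
      · intro w hw
        rcases hz with rfl | rfl <;> rcases hw with rfl | rfl
        · exact Commute.refl _
        · exact h
        · exact h.symm
        · exact Commute.refl _
      · exact Commute.one_right _
      · intro u v _ _ hu hv; exact hu.mul_right hv
      · intro u _ hu; exact hu.inv_right
    · intro y _; exact Commute.one_left _
    · intro u v _ _ hu hv y hy; exact (hu y hy).mul_left (hv y hy)
    · intro u _ hu y hy; exact (hu y hy).inv_left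
  have hc : ∀ x y : H, x * y = y * x := by
    rintro ⟨x, hx⟩ ⟨y, hy⟩
    ext
    exact hcomm x hx y hy
  obtain ⟨c, hcyc⟩ := isFreeGroup_comm_cyclic hc
  have ha : a ∈ H := Subgroup.subset_closure (by simp)
  have hb : b ∈ H := Subgroup.subset_closure (by simp)
  obtain ⟨m, hm⟩ := hcyc ⟨a, ha⟩
  obtain ⟨n, hn⟩ := hcyc ⟨b, hb⟩
  refine ⟨(c : FreeGroup α), m, n, ?_, ?_⟩
  · have := congrArg (Subtype.val) hm
    simpa using this
  · have := congrArg (Subtype.val) hn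
    simpa using this
end

section
/- Let F be a free group, a ∈ F with a ≠ 1, and n a nonzero integer. If g ∈ F satisfies g * a^n * g⁻¹ = a^n, then g commutes with a. -/
theorem stmt_3_general {α : Type*} (a : FreeGroup α) (n : ℤ) (hn : n ≠ 0)
    (g : FreeGroup α) (h : g * a ^ n * g⁻¹ = a ^ n) : g * a = a * g := by
  have hconj : (g * a * g⁻¹) ^ n = a ^ n := by rw [conj_zpow, h]
  -- `n`-th roots are unique in a free group: Mathlib's `IsMulTorsionFree (FreeGroup α)`,
  -- proved by comparing cyclic reductions of words.
  rw [zpow_left_inj hn] at hconj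
  exact mul_inv_eq_iff_eq_mul.mp hconj

theorem stmt_3 {α : Type*} (a : FreeGroup α) (ha : a ≠ 1) (n : ℤ) (hn : n ≠ 0)
    (g : FreeGroup α) (h : g * a ^ n * g⁻¹ = a ^ n) : g * a = a * g :=
  stmt_3_general a n hn g h
end

section
/- Let F be a free group, let s₁, s₂ ∈ F generate a nonabelian subgroup, and let ε, b ∈ F with ε*b ≠ b*ε. Then for integers m ≠ n, there is no γ ∈ F with γ*s₁*γ⁻¹ = s₁, γ*s₂*γ⁻¹ = s₂, and γ*(ε^m * b * ε^(-m))*γ⁻¹ = ε^n * b * ε^(-n). In particular the triples (s₁, s₂, ε^m b ε^{-m}), m ∈ ℤ, lie in pairwise distinct conjugacy classes of triples. -/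
/-!
If `γ` fixes `s₁` and `s₂` under conjugation, it commutes with a nonabelian subgroup of the free
group. Commutation is transitive on nontrivial elements of a free group, so `γ = 1`. The remaining
equation says that `ε ^ (m - n)` commutes with `b`; as free groups are torsion-free,
`ε ^ (m - n) ≠ 1`, and transitivity through `ε ^ (m - n)` makes `ε` commute with `b`.
-/

theorem commute_zpow_sub_of_conj_eq {G : Type*} [Group G] {ε b : G} {m n : ℤ}
    (h : ε ^ m * b * ε ^ (-m) = ε ^ n * b * ε ^ (-n)) : Commute (ε ^ (m - n)) b :=
  calc ε ^ (m - n) * b = ε ^ (-n) * (ε ^ m * b * ε ^ (-m)) * ε ^ m := by group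
    _ = ε ^ (-n) * (ε ^ n * b * ε ^ (-n)) * ε ^ m := by rw [h]
    _ = b * ε ^ (m - n) := by group

namespace FreeGroup

variable {α : Type*}

theorem toWord_of_mul_of_fst_ne [DecidableEq α] {g : FreeGroup α} {p : α × Bool}
    {t : List (α × Bool)} (hg : g.toWord = p :: t) {c : α} (hc : c ≠ p.1) :
    (of c * g).toWord = (c, true) :: g.toWord := by
  rw [toWord_mul, toWord_of, List.singleton_append, IsReduced.reduce_eq]
  rw [hg, isReduced_cons_cons]
  exact ⟨fun h => absurd h hc, hg ▸ isReduced_toWord⟩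

theorem fst_eq_of_commute_of [DecidableEq α] {g : FreeGroup α} {c : α} (hgc : Commute g (of c))
    {p : α × Bool} {t : List (α × Bool)} (hg : g.toWord = p :: t) : p.1 = c := by
  -- otherwise `of c * g` is reduced as written, and the sublist `(g * of c).toWord` of
  -- `g.toWord ++ [(c, true)]` has the same length, so both words start with the same letter
  by_contra hpc
  have hleft := toWord_of_mul_of_fst_ne hg (Ne.symm hpc)
  have hright : List.Sublist (g * of c).toWord (g.toWord ++ [(c, true)]) := by
    simpa only [toWord_of] using toWord_mul_sublist g (of c)
  rw [hgc.eq, hleft] at hright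
  have := hright.eq_of_length (by simp)
  rw [hg] at this
  exact hpc (congrArg Prod.fst (List.cons.inj this).1).symm

theorem commute_of_subsingleton [Subsingleton α] (a b : FreeGroup α) : Commute a b := by
  induction a with
  | C1 => exact Commute.one_left b
  | of x =>
    induction b with
    | C1 => exact Commute.one_right _
    | of y => rw [Subsingleton.elim x y]
    | inv_of y h => exact h.inv_right
    | mul y z hy hz => exact hy.mul_right hz
  | inv_of x h => exact h.inv_left
  | mul x y hx hy => exact hx.mul_left hy

end FreeGroup

namespace IsFreeGroup

theorem commute_of_forall_commute {G : Type*} [Group G] [IsFreeGroup G] {z : G} (hz1 : z ≠ 1)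
    (hz : ∀ g, Commute z g) (a b : G) : Commute a b := by
  classical
  let e := toFreeGroup G
  obtain ⟨p, t, hw⟩ := List.exists_cons_of_ne_nil
    (mt FreeGroup.toWord_eq_nil_iff.mp ((map_ne_one_iff e e.injective).mpr hz1))
  -- every generator is the first letter of `e z`
  have : Subsingleton (Generators G) := ⟨fun c d => by
    have key (c) : p.1 = c :=
      FreeGroup.fst_eq_of_commute_of (by simpa using (hz (e.symm (.of c))).map e) hw
    rw [← key c, ← key d]⟩
  simpa using (FreeGroup.commute_of_subsingleton (e a) (e b)).map e.symm

end IsFreeGroup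

namespace FreeGroup

variable {α : Type*}

/-- Commutative transitivity: the centralizer of `y` is free (Nielsen–Schreier) with `y` central. -/
theorem commute_trans_of_ne_one {y : FreeGroup α} (hy : y ≠ 1) {a b : FreeGroup α}
    (ha : Commute a y) (hb : Commute b y) : Commute a b := by
  let H := Subgroup.centralizer ({y} : Set (FreeGroup α))
  have hyH : y ∈ H := Subgroup.mem_centralizer_singleton_iff.mpr rfl
  have hz : ∀ g : H, Commute (⟨y, hyH⟩ : H) g := fun g =>
    Subtype.ext (Subgroup.mem_centralizer_singleton_iff.mp g.2).symm
  exact congrArg Subtype.val <| IsFreeGroup.commute_of_forall_commute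
    (G := H) (z := ⟨y, hyH⟩) (fun h => hy (congrArg Subtype.val h)) hz
    ⟨a, Subgroup.mem_centralizer_singleton_iff.mpr ha.eq⟩
    ⟨b, Subgroup.mem_centralizer_singleton_iff.mpr hb.eq⟩

theorem eq_one_of_mem_centralizer {H : Subgroup (FreeGroup α)}
    {γ : FreeGroup α} (hγ : γ ∈ Subgroup.centralizer H) {x y : FreeGroup α} (hx : x ∈ H)
    (hy : y ∈ H) (hxy : ¬Commute x y) : γ = 1 := by
  by_contra hγ1
  exact hxy <| commute_trans_of_ne_one hγ1 (hγ x hx) (hγ y hy)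

end FreeGroup

theorem stmt_5 {α : Type*} (s₁ s₂ : FreeGroup α)
    (hna : ∃ x ∈ Subgroup.closure {s₁, s₂}, ∃ y ∈ Subgroup.closure {s₁, s₂}, x * y ≠ y * x)
    (ε b : FreeGroup α) (hεb : ε * b ≠ b * ε) (m n : ℤ) (hmn : m ≠ n) :
    ¬ ∃ γ : FreeGroup α, γ * s₁ * γ⁻¹ = s₁ ∧ γ * s₂ * γ⁻¹ = s₂ ∧
      γ * (ε ^ m * b * ε ^ (-m)) * γ⁻¹ = ε ^ n * b * ε ^ (-n) := by
  rintro ⟨γ, h₁, h₂, h₃⟩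
  have hγ : γ ∈ Subgroup.centralizer (Subgroup.closure {s₁, s₂}) := by
    rw [Subgroup.centralizer_closure, Subgroup.mem_centralizer_iff]
    rintro s (rfl | rfl | -)
    · exact (mul_inv_eq_iff_eq_mul.mp h₁).symm
    · exact (mul_inv_eq_iff_eq_mul.mp h₂).symm
  obtain ⟨x, hx, y, hy, hxy⟩ := hna
  obtain rfl := FreeGroup.eq_one_of_mem_centralizer hγ hx hy hxy
  have hcomm := commute_zpow_sub_of_conj_eq (by simpa only [one_mul, inv_one, mul_one] using h₃)
  have hε : ε ≠ 1 := by rintro rfl; simp at hεb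
  have hpow : ε ^ (m - n) ≠ 1 := by
    rw [Ne, IsMulTorsionFree.zpow_eq_one_iff_right hε]
    exact sub_ne_zero.mpr hmn
  exact hεb (FreeGroup.commute_trans_of_ne_one hpow (Commute.self_zpow ε _) hcomm.symm).eq
end

section
/- Let F be a free group and let a, b ∈ F be nontrivial elements such that the cyclic subgroups ⟨a⟩ and ⟨b⟩ are commensurable (their intersection has finite index in both). Then a and b commute. -/
/-!
Commensurability of `⟨a⟩` and `⟨b⟩` gives a relation `a ^ k = b ^ n` with `k > 0`. By
Nielsen–Schreier the subgroup generated by `a` and `b` is free, and it is generated by two elements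
satisfying this relation. Abelianizing, the images of the basis elements all have their `k`-th
powers in the cyclic group generated by the image of `b`, which is impossible for two distinct basis
elements. So the basis has at most one element, the subgroup is cyclic, and `a`, `b` commute.
-/

open Subgroup

theorem map_zpow_mem_zpowers_of_mem_closure_pair {G A : Type*} [Group G] [CommGroup A] (f : G →* A)
    {x y z : G} {m n : ℤ} (hxy : x ^ m = y ^ n) (hz : z ∈ closure {x, y}) :
    f z ^ m ∈ zpowers (f y) := by
  induction hz using closure_induction with
  | mem w hw =>
    rcases hw with rfl | rfl
    · rw [← map_zpow, hxy, map_zpow]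
      exact zpow_mem_zpowers _ _
    · exact zpow_mem (mem_zpowers _) m
  | one => simp
  | mul u w _ _ hu hw => simpa [mul_zpow] using mul_mem hu hw
  | inv u _ hu => simpa [inv_zpow'] using inv_mem hu

theorem Finsupp.eq_of_zsmul_single_mem_zmultiples {S : Type*} {v : S →₀ ℤ} {m : ℤ} (hm : m ≠ 0)
    {s t : S} (hs : m • single s 1 ∈ AddSubgroup.zmultiples v)
    (ht : m • single t 1 ∈ AddSubgroup.zmultiples v) : s = t := by
  by_contra hst
  obtain ⟨c, hc⟩ := hs
  obtain ⟨d, hd⟩ := ht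
  have hct : c * v t = 0 := by simpa [hst] using congrArg (· t) hc
  have hdt : d * v t = m := by simpa using congrArg (· t) hd
  have hcs : c * v s = m := by simpa using congrArg (· s) hc
  have hvt : v t ≠ 0 := fun h => hm (by simpa [h] using hdt.symm)
  have hc0 : c = 0 := (mul_eq_zero.mp hct).resolve_right hvt
  exact hm (by simpa [hc0] using hcs.symm)

theorem FreeGroup.commute_of_subsingleton_s6 {S : Type*} [Subsingleton S] (x y : FreeGroup S) :
    Commute x y := by
  cases isEmpty_or_nonempty S with
  | inl _ => exact Subsingleton.elim (α := FreeGroup S) _ _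
  | inr h =>
    have : Unique S := uniqueOfSubsingleton h.some
    exact mul_comm' x y

theorem IsFreeGroup.commute_of_closure_pair_eq_top {G : Type*} [Group G] [IsFreeGroup G] {x y : G}
    (hgen : closure {x, y} = ⊤) {m n : ℤ} (hm : m ≠ 0) (hxy : x ^ m = y ^ n) : Commute x y := by
  let e := IsFreeGroup.toFreeGroup G
  let f : G →* Multiplicative (Generators G →₀ ℤ) :=
    (FreeGroup.lift fun s => Multiplicative.ofAdd (Finsupp.single s 1)).comp e.toMonoidHom
  have hgens : ∀ s, m • Finsupp.single s 1 ∈ AddSubgroup.zmultiples (f y).toAdd := by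
    intro s
    obtain ⟨c, hc⟩ :=
      map_zpow_mem_zpowers_of_mem_closure_pair f hxy (hgen ▸ mem_top (e.symm (.of s)))
    refine ⟨c, ?_⟩
    simpa [f] using congrArg Multiplicative.toAdd hc
  have : Subsingleton (Generators G) :=
    ⟨fun s t => Finsupp.eq_of_zsmul_single_mem_zmultiples hm (hgens s) (hgens t)⟩
  simpa using (FreeGroup.commute_of_subsingleton_s6 (e x) (e y)).map e.symm

theorem IsFreeGroup.commute_of_zpow_eq_zpow {G : Type*} [Group G] [IsFreeGroup G] {x y : G}
    {m n : ℤ} (hm : m ≠ 0) (hxy : x ^ m = y ^ n) : Commute x y := by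
  let H := closure ({x, y} : Set G)
  have hx : x ∈ H := subset_closure (by simp)
  have hy : y ∈ H := subset_closure (by simp)
  have hgen : closure {(⟨x, hx⟩ : H), ⟨y, hy⟩} = ⊤ := by
    rw [← closure_closure_coe_preimage (k := {x, y})]
    congr 1
    ext ⟨z, _⟩
    simp
  exact congrArg Subtype.val <|
    IsFreeGroup.commute_of_closure_pair_eq_top hgen hm (Subtype.ext hxy)

theorem stmt_6_general {α : Type*} (a b : FreeGroup α)
    (h : Subgroup.Commensurable (Subgroup.zpowers a) (Subgroup.zpowers b)) : a * b = b * a := by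
  obtain ⟨k, hk, -, hak, -⟩ := exists_pow_mem_of_relIndex_ne_zero h.2 (mem_zpowers a)
  obtain ⟨n, hn⟩ := mem_zpowers_iff.mp hak
  have hkn : a ^ (k : ℤ) = b ^ n := by rw [hn, zpow_natCast]
  exact (IsFreeGroup.commute_of_zpow_eq_zpow (by positivity) hkn).eq

theorem stmt_6 {α : Type*} (a b : FreeGroup α) (ha : a ≠ 1) (hb : b ≠ 1)
    (h : Subgroup.Commensurable (Subgroup.zpowers a) (Subgroup.zpowers b)) : a * b = b * a :=
  stmt_6_general a b h
end

section
/- In a free group, no nontrivial element is conjugate to its own inverse: if g * a * g⁻¹ = a⁻¹ then a = 1. -/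
/-- The relation `g a g⁻¹ = a⁻¹` gives `(g * a) ^ 2 = g ^ 2`, and square roots are unique in a
torsion-free group. -/
theorem IsMulTorsionFree.eq_one_of_mul_mul_inv_eq_inv {G : Type*} [Group G] [IsMulTorsionFree G]
    {a g : G} (h : g * a * g⁻¹ = a⁻¹) : a = 1 := by
  have hinv : a⁻¹ = g⁻¹ * a * g := by
    simpa [mul_assoc] using congrArg (fun x => g⁻¹ * x⁻¹ * g) h
  have hsq : (g * a) ^ 2 = g ^ 2 := by
    calc (g * a) ^ 2 = g * (a * g) * a := by rw [sq]; group
      _ = g * (g * a⁻¹) * a := by rw [hinv]; group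
      _ = g ^ 2 := by rw [sq]; group
  simpa using (pow_left_inj two_ne_zero).mp hsq

theorem stmt_8 {α : Type*} (a g : FreeGroup α) (h : g * a * g⁻¹ = a⁻¹) : a = 1 :=
  IsMulTorsionFree.eq_one_of_mul_mul_inv_eq_inv h
end

section
/- Let F be a free group and g, h ∈ F. If g ≠ 1 and g * h * g⁻¹ and h generate an abelian subgroup and h ≠ 1, then g and h commute. -/
/-!
By Nielsen–Schreier the abelian subgroup generated by `g * h * g⁻¹` and `h` is free, hence cyclic,
so `h = c ^ q` and `g * h * g⁻¹ = c ^ p` for some `c`. The length `cyclicNorm x` of the cyclic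
reduction of `x` is the slope of `n ↦ (x ^ n).norm`, which is affine for `n ≥ 1`; conjugation
changes `(x ^ n).norm` by at most `2 * g.norm`, so `cyclicNorm` is a conjugacy invariant, and it
scales by `|k|` on `k`-th powers. Hence `|p| = |q|`. The case `p = -q` is excluded because
`g * x * g⁻¹ = x⁻¹` gives `(g * x) ^ 2 = g ^ 2`, and square roots are unique in a free group.
-/

theorem Nat.le_of_forall_mul_le_mul_add {a b C : ℕ} (h : ∀ k ≠ 0, k * a ≤ k * b + C) :
    a ≤ b := by
  by_contra! hab
  have := h (C + 1) C.succ_ne_zero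
  nlinarith

theorem eq_one_of_conj_eq_inv {G : Type*} [Group G] [IsMulTorsionFree G] {g x : G}
    (h : g * x * g⁻¹ = x⁻¹) : x = 1 := by
  have hsq : (g * x) ^ 2 = g ^ 2 :=
    calc (g * x) ^ 2 = g * (x * (g * x * g⁻¹)) * g := by rw [sq]; group
      _ = g ^ 2 := by rw [h, mul_inv_cancel, mul_one, sq]
  simpa using pow_left_injective two_ne_zero hsq

theorem FreeGroup.of_mul_of_ne_of_mul_of {α : Type*} {a b : α} (hab : a ≠ b) :
    of a * of b ≠ of b * of a := by
  classical
  have toWord_of_mul_of (a b : α) : (of a * of b).toWord = [(a, true), (b, true)] := by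
    rw [toWord_mul, toWord_of, toWord_of]
    exact IsReduced.reduce_eq (by simp [IsReduced])
  intro h
  have := congrArg toWord h
  rw [toWord_of_mul_of, toWord_of_mul_of] at this
  exact hab (Prod.mk.inj (List.cons_eq_cons.mp this).1).1

theorem IsFreeGroup.isCyclic_of_isMulCommutative (G : Type*) [Group G] [IsFreeGroup G]
    [hG : IsMulCommutative G] : IsCyclic G := by
  let e := toFreeGroup G
  have : Subsingleton (Generators G) := ⟨fun a b => by_contra fun hab =>
    FreeGroup.of_mul_of_ne_of_mul_of hab <| e.symm.injective <| by
      simp only [map_mul]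
      exact isMulCommutative_iff.mp hG _ _⟩
  refine e.isCyclic.mpr ?_
  rcases isEmpty_or_nonempty (Generators G) with _ | ⟨⟨a⟩⟩
  · exact isCyclic_of_subsingleton
  · exact @FreeGroup.instIsCyclicOfUnique _ (uniqueOfSubsingleton a)

theorem IsFreeGroup.exists_zpow_eq_of_commute {G : Type*} [Group G] [IsFreeGroup G] {x y : G}
    (hxy : Commute x y) : ∃ c : G, ∃ p q : ℤ, c ^ p = x ∧ c ^ q = y := by
  have := Subgroup.isMulCommutative_closure (k := {x, y}) <| by
    simp only [Set.mem_insert_iff, Set.mem_singleton_iff]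
    rintro a (rfl | rfl) b (rfl | rfl)
    exacts [rfl, hxy.eq, hxy.symm.eq, rfl]
  obtain ⟨c, hc⟩ := (Subgroup.isCyclic_iff_exists_zpowers_eq_top _).mp
    (isCyclic_of_isMulCommutative (Subgroup.closure {x, y}))
  obtain ⟨p, hp⟩ := Subgroup.mem_zpowers_iff.mp
    (hc ▸ Subgroup.subset_closure (by simp) : x ∈ Subgroup.zpowers c)
  obtain ⟨q, hq⟩ := Subgroup.mem_zpowers_iff.mp
    (hc ▸ Subgroup.subset_closure (by simp) : y ∈ Subgroup.zpowers c)
  exact ⟨c, p, q, hp, hq⟩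

namespace FreeGroup

variable {α : Type*} [DecidableEq α]

theorem norm_conj_le (g x : FreeGroup α) : (g * x * g⁻¹).norm ≤ x.norm + 2 * g.norm := by
  have h₁ := norm_mul_le (g * x) g⁻¹
  have h₂ := norm_mul_le g x
  rw [norm_inv_eq] at h₁
  omega

def cyclicNorm (x : FreeGroup α) : ℕ := (reduceCyclically x.toWord).length

open reduceCyclically in
theorem norm_pow_of_ne_zero (x : FreeGroup α) {n : ℕ} (hn : n ≠ 0) :
    (x ^ n).norm = n * x.cyclicNorm + 2 * (conjugator x.toWord).length := by
  rw [norm, cyclicNorm, toWord_pow, reduce_flatten_replicate isReduced_toWord, if_neg hn]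
  simp only [List.length_append, List.length_flatten, List.map_replicate, List.sum_replicate,
    invRev_length, smul_eq_mul]
  ring

theorem cyclicNorm_le_of_norm_pow_le {x y : FreeGroup α} (C : ℕ)
    (h : ∀ n ≠ 0, (x ^ n).norm ≤ (y ^ n).norm + C) : x.cyclicNorm ≤ y.cyclicNorm := by
  refine Nat.le_of_forall_mul_le_mul_add
    (C := C + 2 * (reduceCyclically.conjugator y.toWord).length) fun n hn => ?_
  have := h n hn
  rw [norm_pow_of_ne_zero x hn, norm_pow_of_ne_zero y hn] at this
  omega

theorem cyclicNorm_conj (g x : FreeGroup α) : (g * x * g⁻¹).cyclicNorm = x.cyclicNorm := by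
  refine le_antisymm (cyclicNorm_le_of_norm_pow_le (2 * g.norm) fun n _ => ?_)
    (cyclicNorm_le_of_norm_pow_le (2 * g⁻¹.norm) fun n _ => ?_)
  · rw [conj_pow]
    exact norm_conj_le g (x ^ n)
  · have := norm_conj_le g⁻¹ (g * x ^ n * g⁻¹)
    rwa [inv_inv, show g⁻¹ * (g * x ^ n * g⁻¹) * g = x ^ n by group, ← conj_pow] at this

theorem cyclicNorm_inv (x : FreeGroup α) : x⁻¹.cyclicNorm = x.cyclicNorm :=
  le_antisymm (cyclicNorm_le_of_norm_pow_le 0 fun n _ => by simp [inv_pow, norm_inv_eq])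
    (cyclicNorm_le_of_norm_pow_le 0 fun n _ => by simp [inv_pow, norm_inv_eq])

theorem cyclicNorm_pow (x : FreeGroup α) (n : ℕ) : (x ^ n).cyclicNorm = n * x.cyclicNorm := by
  rcases eq_or_ne n 0 with rfl | hn
  · simp [cyclicNorm]
  set A := (reduceCyclically.conjugator (x ^ n).toWord).length
  set B := (reduceCyclically.conjugator x.toWord).length
  have key : ∀ k ≠ 0, k * (x ^ n).cyclicNorm + 2 * A = k * (n * x.cyclicNorm) + 2 * B := by
    intro k hk
    have := norm_pow_of_ne_zero (x ^ n) hk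
    rw [← pow_mul, norm_pow_of_ne_zero x (mul_ne_zero hn hk)] at this
    linarith
  exact le_antisymm
    (Nat.le_of_forall_mul_le_mul_add (C := 2 * B) fun k hk => by linarith [key k hk])
    (Nat.le_of_forall_mul_le_mul_add (C := 2 * A) fun k hk => by linarith [key k hk])

theorem cyclicNorm_zpow (x : FreeGroup α) (n : ℤ) :
    (x ^ n).cyclicNorm = n.natAbs * x.cyclicNorm := by
  rcases Int.natAbs_eq n with h | h <;> rw [h]
  · rw [zpow_natCast, cyclicNorm_pow, Int.natAbs_natCast]
  · rw [zpow_neg, zpow_natCast, cyclicNorm_inv, cyclicNorm_pow, Int.natAbs_neg,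
      Int.natAbs_natCast]

theorem cyclicNorm_eq_zero_iff {x : FreeGroup α} : x.cyclicNorm = 0 ↔ x = 1 := by
  refine ⟨fun h => ?_, by rintro rfl; simp [cyclicNorm]⟩
  rw [cyclicNorm, List.length_eq_zero_iff] at h
  rw [← mk_toWord (x := x), ← reduceCyclically.conj_conjugator_reduceCyclically x.toWord, h,
    List.append_nil, ← mul_mk, ← inv_mk, mul_inv_cancel]

theorem natAbs_eq_of_conj_zpow_eq_zpow {g c : FreeGroup α} (hc : c ≠ 1) {n m : ℤ}
    (h : g * c ^ n * g⁻¹ = c ^ m) : n.natAbs = m.natAbs := by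
  have := congrArg cyclicNorm h
  rw [cyclicNorm_conj, cyclicNorm_zpow, cyclicNorm_zpow] at this
  exact Nat.eq_of_mul_eq_mul_right (Nat.pos_of_ne_zero (mt cyclicNorm_eq_zero_iff.mp hc)) this

theorem zpow_eq_zpow_of_conj_eq {g c : FreeGroup α} {n m : ℤ} (h : g * c ^ n * g⁻¹ = c ^ m) :
    c ^ m = c ^ n := by
  rcases eq_or_ne c 1 with rfl | hc
  · simp
  rcases Int.natAbs_eq_natAbs_iff.mp (natAbs_eq_of_conj_zpow_eq_zpow hc h) with rfl | rfl
  · rfl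
  · have : c ^ (-m) = 1 := eq_one_of_conj_eq_inv (by rw [h, zpow_neg, inv_inv])
    rw [this, ← inv_inv (c ^ m), ← zpow_neg, this, inv_one]

end FreeGroup

theorem stmt_15_general {α : Type*} (g h : FreeGroup α)
    (hab : ∀ x ∈ Subgroup.closure {g * h * g⁻¹, h}, ∀ y ∈ Subgroup.closure {g * h * g⁻¹, h},
      x * y = y * x) :
    g * h = h * g := by
  classical
  obtain ⟨c, p, q, hp, hq⟩ := IsFreeGroup.exists_zpow_eq_of_commute <|
    hab (g * h * g⁻¹) (Subgroup.subset_closure (by simp)) h (Subgroup.subset_closure (by simp))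
  have hconj : g * h * g⁻¹ = h := by
    rw [← hp, ← hq]
    exact FreeGroup.zpow_eq_zpow_of_conj_eq (by rw [hq, hp])
  exact mul_inv_eq_iff_eq_mul.mp hconj

theorem stmt_15 {α : Type*} (g h : FreeGroup α) (hg : g ≠ 1) (hh : h ≠ 1)
    (hab : ∀ x ∈ Subgroup.closure {g * h * g⁻¹, h}, ∀ y ∈ Subgroup.closure {g * h * g⁻¹, h},
      x * y = y * x) :
    g * h = h * g :=
  stmt_15_general g h hab
end
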